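/- Each of the 6 edges of the closed polygonal chain with vertices (−(1+√13)/6, −(1+√13)/6, 0), ((7+√13)/6, (7+√13)/6, 0), (−(1+√13)/4, 1/2, (3+√13)/4), ((7+√13)/6, −(1+√13)/6, 0), (−(1+√13)/6, (7+√13)/6, 0), ((5+√13)/4, 1/2, (3+√13)/4), returning to the start, has Euclidean length exactly √2·(4+√13)/3. -/

import Mathlib

/-! With `s = √13`, the squared length of every edge is a polynomial in `s` which, reduced
modulo `s² = 13`, equals `2 ((4 + s) / 3)²`. -/

noncomputable def pt3 (a b c : ℝ) : EuclideanSpace ℝ (Fin 3) := WithLp.toLp 2 ![a, b, c]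

/-- The vertices of the smart covering cycle `F_{2,2,2}` (last vertex = first). -/
noncomputable def F222 : Fin 7 → EuclideanSpace ℝ (Fin 3) :=
  ![pt3 (-(1 + Real.sqrt 13) / 6) (-(1 + Real.sqrt 13) / 6) 0,
    pt3 ((7 + Real.sqrt 13) / 6) ((7 + Real.sqrt 13) / 6) 0,
    pt3 (-(1 + Real.sqrt 13) / 4) (1 / 2) ((3 + Real.sqrt 13) / 4),
    pt3 ((7 + Real.sqrt 13) / 6) (-(1 + Real.sqrt 13) / 6) 0,
    pt3 (-(1 + Real.sqrt 13) / 6) ((7 + Real.sqrt 13) / 6) 0,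
    pt3 ((5 + Real.sqrt 13) / 4) (1 / 2) ((3 + Real.sqrt 13) / 4),
    pt3 (-(1 + Real.sqrt 13) / 6) (-(1 + Real.sqrt 13) / 6) 0]

theorem dist_pt3 (a b c a' b' c' : ℝ) :
    dist (pt3 a b c) (pt3 a' b' c') = √((a - a') ^ 2 + (b - b') ^ 2 + (c - c') ^ 2) := by
  simp [EuclideanSpace.dist_eq, pt3, Fin.sum_univ_three, Real.dist_eq, sq_abs]

theorem dist_pt3_eq_sqrt_two_mul {a b c a' b' c' r : ℝ} (hr : 0 ≤ r)
    (h : (a - a') ^ 2 + (b - b') ^ 2 + (c - c') ^ 2 = 2 * r ^ 2) :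
    dist (pt3 a b c) (pt3 a' b' c') = √2 * r := by
  rw [dist_pt3, h, Real.sqrt_mul zero_le_two, Real.sqrt_sq hr]

/-- Each of the 6 edges of the closed chain `F_{2,2,2}` has Euclidean length exactly
`√2·(4+√13)/3`. -/
theorem stmt18 :
    ∀ i : Fin 6, dist (F222 i.castSucc) (F222 i.succ)
      = Real.sqrt 2 * (4 + Real.sqrt 13) / 3 := by
  have sqrt13_sq : √13 ^ 2 = 13 := Real.sq_sqrt (by norm_num)
  intro i
  rw [mul_div_assoc]
  fin_cases i <;> simp only [F222] <;>
    exact dist_pt3_eq_sqrt_two_mul (by positivity) (by linarith [sqrt13_sq])
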